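/- arXiv:2209.14935 — 2 statements merged into one kernel-verified Lean document; each statement's English description precedes it below -/
import Mathlib

section
/- Let ρ : S → ℝ satisfy ρ(s) > 0 for all s, let d ∈ ℕ, let F : (S × A) → ℝ^d → ℝ^d (forward map, F (s,a) z ∈ ℝ^d), let B : S → ℝ^d (backward map), and for each z ∈ ℝ^d let π_z be a deterministic policy. Assume: (i) the exact forward-backward factorization holds, i.e., for every z ∈ ℝ^d and all (s,a) ∈ S × A and s' ∈ S, M^{π_z} ((s,a), s') = (F (s,a) z ⬝ B s') * ρ(s'); and (ii) each π_z is greedy with respect to (s,a) ↦ F (s,a) z ⬝ z. Then for every reward r : S → ℝ, setting z_r := ∑_s ρ(s) • r(s) • B(s), the policy π_{z_r} is optimal for r, and Q^{π_{z_r}}_r (s,a) = F (s,a) z_r ⬝ z_r for all (s,a) ∈ S × A. -/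
open Matrix

/-- The selection matrix `E_π` of a deterministic policy `π : S → A`:
`E_π (s, (s',a)) = 1` if `s' = s` and `a = π s`, and `0` otherwise. -/
noncomputable def selMat {S A : Type*} [DecidableEq S] [DecidableEq A] (π : S → A) :
    Matrix S (S × A) ℝ :=
  fun s p => if p.1 = s ∧ p.2 = π s then 1 else 0

/-- The Q-function of policy `π` for reward `r`:
`Q^π_r = ∑_{t ≥ 0} γ^t • ((P * E_π)^t).mulVec (P.mulVec r)`. -/
noncomputable def Qfun {S A : Type*} [Fintype S] [Fintype A] [DecidableEq S] [DecidableEq A]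
    (P : Matrix (S × A) S ℝ) (γ : ℝ) (π : S → A) (r : S → ℝ) : S × A → ℝ :=
  ∑' t : ℕ, γ ^ t • ((P * selMat π) ^ t).mulVec (P.mulVec r)

/-- The successor representation `M^π = ∑_{t ≥ 0} γ^t • (P * E_π)^t * P`. -/
noncomputable def SR {S A : Type*} [Fintype S] [Fintype A] [DecidableEq S] [DecidableEq A]
    (P : Matrix (S × A) S ℝ) (γ : ℝ) (π : S → A) : Matrix (S × A) S ℝ :=
  ∑' t : ℕ, γ ^ t • ((P * selMat π) ^ t * P)

/-!
Since `Q^π_r = M^π r`, the factorization gives `Q^{π_z}_r (s, a) = F (s, a) z ⬝ z_r` for every `z`;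
for `z = z_r` the greediness hypothesis then says that `π_{z_r}` is greedy with respect to its own
Q-function, and such a policy is optimal (policy improvement). Indeed, both `Q := Q^{π_{z_r}}_r` and
`Q' := Q^{π'}_r` satisfy Bellman equations `Q = P r + γ P E_π Q`, and greediness turns them into
`Δ ≥ γ P E_{π'} Δ` for `Δ := Q - Q'`. At an entry where `Δ` is minimal, a row-stochastic matrix
cannot push `Δ` below its minimum, so `min Δ ≥ γ min Δ`, whence `Δ ≥ 0` as `γ < 1`.
-/

namespace Matrix

variable {ι : Type*} [Fintype ι] [DecidableEq ι] {M : Matrix ι ι ℝ}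

lemma le_mulVec_of_mem_rowStochastic (hM : M ∈ rowStochastic ℝ ι) {v : ι → ℝ} {c : ℝ}
    (hv : ∀ j, c ≤ v j) (i : ι) : c ≤ (M *ᵥ v) i := by
  have hshift : 0 ≤ (M *ᵥ (v - c • 1)) i :=
    nonneg_mulVec_of_mem_rowStochastic hM (fun j => by simpa using hv j) i
  rwa [mulVec_sub, mulVec_smul, one_vecMul_of_mem_rowStochastic hM, Pi.sub_apply,
    Pi.smul_apply, Pi.one_apply, smul_eq_mul, mul_one, sub_nonneg] at hshift

lemma norm_mulVec_le_of_mem_rowStochastic (hM : M ∈ rowStochastic ℝ ι) (v : ι → ℝ) :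
    ‖M *ᵥ v‖ ≤ ‖v‖ := by
  refine (pi_norm_le_iff_of_nonneg (norm_nonneg v)).2 fun i => abs_le.2 ⟨?_, ?_⟩
  · exact le_mulVec_of_mem_rowStochastic hM (fun j => neg_le_of_abs_le (norm_le_pi_norm v j)) i
  · have := le_mulVec_of_mem_rowStochastic hM (v := -v)
      (fun j => neg_le_neg (le_of_abs_le (norm_le_pi_norm v j))) i
    rwa [mulVec_neg, Pi.neg_apply, neg_le_neg_iff] at this

lemma nonneg_of_smul_mulVec_le_self (hM : M ∈ rowStochastic ℝ ι) {γ : ℝ} (hγ0 : 0 ≤ γ)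
    (hγ1 : γ < 1) {x : ι → ℝ} (hx : γ • (M *ᵥ x) ≤ x) : 0 ≤ x := by
  intro i
  have : Nonempty ι := ⟨i⟩
  obtain ⟨i₀, hi₀⟩ := Finite.exists_min x
  have hmin : x i₀ ≤ (M *ᵥ x) i₀ := le_mulVec_of_mem_rowStochastic hM hi₀ i₀
  have hγx : γ * (M *ᵥ x) i₀ ≤ x i₀ := hx i₀
  have hmin_nonneg : 0 ≤ x i₀ := by nlinarith
  exact hmin_nonneg.trans (hi₀ i)

variable {γ : ℝ}

lemma norm_pow_smul_pow_mulVec_le (hM : M ∈ rowStochastic ℝ ι) (v : ι → ℝ) (t : ℕ) :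
    ‖γ ^ t • (M ^ t *ᵥ v)‖ ≤ |γ| ^ t * ‖v‖ := by
  rw [norm_smul, norm_pow, Real.norm_eq_abs]
  gcongr
  exact norm_mulVec_le_of_mem_rowStochastic (pow_mem hM t) v

lemma summable_pow_smul_pow_mulVec (hM : M ∈ rowStochastic ℝ ι) (hγ : |γ| < 1)
    (v : ι → ℝ) : Summable fun t : ℕ => γ ^ t • (M ^ t *ᵥ v) :=
  .of_norm_bounded ((summable_geometric_of_lt_one (abs_nonneg γ) hγ).mul_right ‖v‖)
    (norm_pow_smul_pow_mulVec_le hM v)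

lemma summable_pow_smul_pow_mul {κ : Type*} (hM : M ∈ rowStochastic ℝ ι) (hγ : |γ| < 1)
    (N : Matrix ι κ ℝ) : Summable fun t : ℕ => γ ^ t • (M ^ t * N) := by
  refine Summable.matrix_transpose (Pi.summable.2 fun k => ?_)
  exact summable_pow_smul_pow_mulVec hM hγ (fun i => N i k)

lemma tsum_pow_smul_pow_mulVec_eq (hM : M ∈ rowStochastic ℝ ι) (hγ : |γ| < 1) (v : ι → ℝ) :
    ∑' t : ℕ, γ ^ t • (M ^ t *ᵥ v) = v + γ • (M *ᵥ ∑' t : ℕ, γ ^ t • (M ^ t *ᵥ v)) := by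
  have hs := summable_pow_smul_pow_mulVec hM hγ v
  have hshift : ∑' t : ℕ, γ ^ (t + 1) • (M ^ (t + 1) *ᵥ v) =
      γ • (M *ᵥ ∑' t : ℕ, γ ^ t • (M ^ t *ᵥ v)) := by
    have hmap : ∑' t : ℕ, M *ᵥ (γ ^ t • (M ^ t *ᵥ v)) = M *ᵥ ∑' t : ℕ, γ ^ t • (M ^ t *ᵥ v) :=
      (hs.hasSum.map (mulVecLin M) (continuous_const.matrix_mulVec continuous_id)).tsum_eq
    rw [← hmap, ← tsum_const_smul'']
    refine tsum_congr fun t => ?_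
    rw [mulVec_smul, mulVec_mulVec, ← pow_succ', smul_smul, ← pow_succ']
  conv_lhs => rw [hs.tsum_eq_zero_add, hshift, pow_zero, pow_zero, one_mulVec, one_smul]

end Matrix

section MDP

variable {S A : Type*} [Fintype S] [Fintype A] [DecidableEq S] [DecidableEq A]
  {P : Matrix (S × A) S ℝ} {γ : ℝ}

lemma selMat_mulVec (π : S → A) (v : S × A → ℝ) (s : S) : (selMat π *ᵥ v) s = v (s, π s) := by
  rw [mulVec, dotProduct, Fintype.sum_eq_single (s, π s)]
  · simp [selMat]
  · intro p hp
    rw [selMat, if_neg fun h => hp (Prod.ext h.1 h.2), zero_mul]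

lemma mul_selMat_mem_rowStochastic (hP0 : ∀ sa s', 0 ≤ P sa s')
    (hP1 : ∀ sa, ∑ s', P sa s' = 1) (π : S → A) : P * selMat π ∈ rowStochastic ℝ (S × A) := by
  refine ⟨fun sa p => Finset.sum_nonneg fun s' _ => mul_nonneg (hP0 sa s') ?_, ?_⟩
  · beta_reduce
    unfold selMat
    split_ifs <;> norm_num
  · have hsel : selMat π *ᵥ (1 : S × A → ℝ) = 1 := funext (selMat_mulVec π 1)
    rw [← mulVec_mulVec, hsel]
    ext sa
    simp [mulVec, dotProduct, hP1]

lemma Qfun_bellman (hP0 : ∀ sa s', 0 ≤ P sa s') (hP1 : ∀ sa, ∑ s', P sa s' = 1)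
    (hγ : |γ| < 1) (π : S → A) (r : S → ℝ) :
    Qfun P γ π r = P *ᵥ r + γ • ((P * selMat π) *ᵥ Qfun P γ π r) :=
  tsum_pow_smul_pow_mulVec_eq (mul_selMat_mem_rowStochastic hP0 hP1 π) hγ _

lemma Qfun_le_of_greedy (hP0 : ∀ sa s', 0 ≤ P sa s') (hP1 : ∀ sa, ∑ s', P sa s' = 1)
    (hγ0 : 0 ≤ γ) (hγ1 : γ < 1) {π : S → A} {r : S → ℝ}
    (hπ : ∀ s a, Qfun P γ π r (s, a) ≤ Qfun P γ π r (s, π s)) (π' : S → A) :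
    Qfun P γ π' r ≤ Qfun P γ π r := by
  have hγ : |γ| < 1 := abs_lt.2 ⟨by linarith, hγ1⟩
  set Q := Qfun P γ π r
  set Q' := Qfun P γ π' r
  have hQ : Q = P *ᵥ r + γ • ((P * selMat π) *ᵥ Q) := Qfun_bellman hP0 hP1 hγ π r
  have hQ' : Q' = P *ᵥ r + γ • ((P * selMat π') *ᵥ Q') := Qfun_bellman hP0 hP1 hγ π' r
  have hselect : selMat π' *ᵥ Q ≤ selMat π *ᵥ Q := fun s => by
    rw [selMat_mulVec, selMat_mulVec]
    exact hπ s (π' s)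
  have himprove : (P * selMat π') *ᵥ Q ≤ (P * selMat π) *ᵥ Q := fun sa => by
    rw [← mulVec_mulVec, ← mulVec_mulVec]
    exact Finset.sum_le_sum fun s _ => mul_le_mul_of_nonneg_left (hselect s) (hP0 sa s)
  suffices 0 ≤ Q - Q' from sub_nonneg.1 this
  refine nonneg_of_smul_mulVec_le_self (mul_selMat_mem_rowStochastic hP0 hP1 π') hγ0 hγ1 ?_
  calc γ • ((P * selMat π') *ᵥ (Q - Q'))
      = γ • ((P * selMat π') *ᵥ Q) - γ • ((P * selMat π') *ᵥ Q') := by rw [mulVec_sub, smul_sub]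
    _ ≤ γ • ((P * selMat π) *ᵥ Q) - γ • ((P * selMat π') *ᵥ Q') := by gcongr
    _ = (P *ᵥ r + γ • ((P * selMat π) *ᵥ Q)) - (P *ᵥ r + γ • ((P * selMat π') *ᵥ Q')) := by abel
    _ = Q - Q' := by rw [← hQ, ← hQ']

lemma Qfun_eq_SR_mulVec (hP0 : ∀ sa s', 0 ≤ P sa s') (hP1 : ∀ sa, ∑ s', P sa s' = 1)
    (hγ : |γ| < 1) (π : S → A) (r : S → ℝ) : Qfun P γ π r = SR P γ π *ᵥ r := by
  have hs := summable_pow_smul_pow_mul (mul_selMat_mem_rowStochastic hP0 hP1 π) hγ P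
  refine HasSum.tsum_eq ?_
  convert hs.hasSum.map (mulVec.addMonoidHomLeft r)
    (continuous_id.matrix_mulVec continuous_const) using 1
  · funext t
    simp [mulVec.addMonoidHomLeft, smul_mulVec, mulVec_mulVec]
  · rfl

lemma Qfun_eq_dotProduct_of_SR_eq {n : Type*} [Fintype n] (hP0 : ∀ sa s', 0 ≤ P sa s')
    (hP1 : ∀ sa, ∑ s', P sa s' = 1) (hγ : |γ| < 1) {π : S → A} {f : S × A → n → ℝ}
    {B : S → n → ℝ} {ρ : S → ℝ} (hSR : ∀ sa s', SR P γ π sa s' = (f sa ⬝ᵥ B s') * ρ s')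
    (r : S → ℝ) (sa : S × A) : Qfun P γ π r sa = f sa ⬝ᵥ ∑ s, ρ s • r s • B s := by
  rw [Qfun_eq_SR_mulVec hP0 hP1 hγ, mulVec, dotProduct, dotProduct_sum]
  refine Finset.sum_congr rfl fun s _ => ?_
  rw [hSR, dotProduct_smul, dotProduct_smul, smul_eq_mul, smul_eq_mul]
  ring

end MDP

theorem stmt5_general {S A : Type*} [Fintype S] [Fintype A] [Nonempty A]
    [DecidableEq S] [DecidableEq A]
    (P : Matrix (S × A) S ℝ) (γ : ℝ)
    (hP0 : ∀ sa s', 0 ≤ P sa s') (hP1 : ∀ sa, ∑ s', P sa s' = 1)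
    (hγ0 : 0 ≤ γ) (hγ1 : γ < 1)
    (ρ : S → ℝ) {d : ℕ}
    (F : S × A → (Fin d → ℝ) → Fin d → ℝ) (B : S → Fin d → ℝ)
    (πz : (Fin d → ℝ) → S → A)
    (hFB : ∀ z : Fin d → ℝ, ∀ sa : S × A, ∀ s' : S,
      SR P γ (πz z) sa s' = (F sa z ⬝ᵥ B s') * ρ s')
    (hgreedy : ∀ z : Fin d → ℝ, ∀ s : S,
      F (s, πz z s) z ⬝ᵥ z =
        Finset.univ.sup' Finset.univ_nonempty (fun a : A => F (s, a) z ⬝ᵥ z))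
    (r : S → ℝ) (zr : Fin d → ℝ) (hzr : zr = ∑ s, ρ s • r s • B s) :
    (∀ π' : S → A, ∀ sa : S × A, Qfun P γ π' r sa ≤ Qfun P γ (πz zr) r sa) ∧
    (∀ sa : S × A, Qfun P γ (πz zr) r sa = F sa zr ⬝ᵥ zr) := by
  have hγ : |γ| < 1 := abs_lt.2 ⟨by linarith, hγ1⟩
  have hQ : ∀ sa, Qfun P γ (πz zr) r sa = F sa zr ⬝ᵥ zr := fun sa => by
    have := Qfun_eq_dotProduct_of_SR_eq hP0 hP1 hγ (hFB zr) r sa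
    rwa [← hzr] at this
  refine ⟨fun π' => Qfun_le_of_greedy hP0 hP1 hγ0 hγ1 (fun s a => ?_) π', hQ⟩
  rw [hQ, hQ, hgreedy]
  exact Finset.le_sup' (fun a => F (s, a) zr ⬝ᵥ zr) (Finset.mem_univ a)

/-- **forward-backward optimality.** Assume the exact forward-backward
factorization `M^{π_z} ((s,a), s') = (F (s,a) z ⬝ B s') * ρ(s')` where `ρ > 0`, and that each
policy `π_z` is greedy with respect to `(s,a) ↦ F (s,a) z ⬝ z`. Then for every reward `r`,
setting `z_r := ∑_s ρ(s) r(s) B(s)`, the policy `π_{z_r}` is optimal for `r`, and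
`Q^{π_{z_r}}_r (s,a) = F (s,a) z_r ⬝ z_r`. -/
theorem stmt5 {S A : Type*} [Fintype S] [Fintype A] [Nonempty S] [Nonempty A]
    [DecidableEq S] [DecidableEq A]
    (P : Matrix (S × A) S ℝ) (γ : ℝ)
    (hP0 : ∀ sa s', 0 ≤ P sa s') (hP1 : ∀ sa, ∑ s', P sa s' = 1)
    (hγ0 : 0 ≤ γ) (hγ1 : γ < 1)
    (ρ : S → ℝ) (hρ : ∀ s, 0 < ρ s) {d : ℕ}
    (F : S × A → (Fin d → ℝ) → Fin d → ℝ) (B : S → Fin d → ℝ)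
    (πz : (Fin d → ℝ) → S → A)
    (hFB : ∀ z : Fin d → ℝ, ∀ sa : S × A, ∀ s' : S,
      SR P γ (πz z) sa s' = (F sa z ⬝ᵥ B s') * ρ s')
    (hgreedy : ∀ z : Fin d → ℝ, ∀ s : S,
      F (s, πz z s) z ⬝ᵥ z =
        Finset.univ.sup' Finset.univ_nonempty (fun a : A => F (s, a) z ⬝ᵥ z))
    (r : S → ℝ) (zr : Fin d → ℝ) (hzr : zr = ∑ s, ρ s • r s • B s) :
    (∀ π' : S → A, ∀ sa : S × A, Qfun P γ π' r sa ≤ Qfun P γ (πz zr) r sa) ∧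
    (∀ sa : S × A, Qfun P γ (πz zr) r sa = F sa zr ⬝ᵥ zr) :=
  stmt5_general P γ hP0 hP1 hγ0 hγ1 ρ F B πz hFB hgreedy r zr hzr
end

section
/- Suppose ρ : S → ℝ satisfies ρ(s) > 0 for all s, and the transitions are given by the finite-rank model P ((s,a), s') = (χ(s,a) ⬝ μ(s')) * ρ(s') for all (s,a) and s', with χ : S × A → ℝ^d and μ : S → ℝ^d. Equip the space of functions S → ℝ with the inner product ⟨x, y⟩_ρ := ∑_s ρ(s) * x(s) * y(s). For a reward r : S → ℝ, let r' be the orthogonal projection of r (with respect to ⟨·,·⟩_ρ) onto the linear span of the d coordinate feature functions s ↦ (μ(s))_i, i = 1, …, d. Then Q^π_r = Q^π_{r'} for every deterministic policy π; consequently, every policy that is optimal for r' is also optimal for r. -/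
/-! The Q-function depends on the reward `r` only through the expected next-step reward `P *ᵥ r`.
In the low-rank model `P *ᵥ r` only sees the `ρ`-weighted inner products of `r` with the feature
functions `μ · i`, and these agree for `r` and its projection `r'`. -/

open Matrix

theorem Matrix.mulVec_eq_zero_of_forall_weighted_sum_eq_zero {R m n ι : Type*} [CommSemiring R]
    [Fintype n] [Fintype ι] (P : Matrix m n R) (χ : m → ι → R) (μ : n → ι → R) (ρ : n → R)
    (hP : ∀ x y, P x y = (χ x ⬝ᵥ μ y) * ρ y) (v : n → R)
    (hv : ∀ i, ∑ y, ρ y * v y * μ y i = 0) : P *ᵥ v = 0 := by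
  funext x
  calc (P *ᵥ v) x = ∑ y, ∑ i, χ x i * (ρ y * v y * μ y i) := by
        simp only [mulVec, dotProduct, hP, Finset.sum_mul]
        exact Finset.sum_congr rfl fun y _ => Finset.sum_congr rfl fun i _ => by ring
    _ = ∑ i, χ x i * ∑ y, ρ y * v y * μ y i := by
        rw [Finset.sum_comm]; simp only [Finset.mul_sum]
    _ = 0 := by simp only [hv, mul_zero, Finset.sum_const_zero]

theorem Qfun_congr_of_mulVec_eq {S A : Type*} [Fintype S] [Fintype A] [DecidableEq S]
    [DecidableEq A] {P : Matrix (S × A) S ℝ} (γ : ℝ) (π : S → A) {r r' : S → ℝ}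
    (h : P *ᵥ r = P *ᵥ r') : Qfun P γ π r = Qfun P γ π r' := by
  simp only [Qfun, h]

theorem stmt9_general {S A : Type*} [Fintype S] [Fintype A]
    [DecidableEq S] [DecidableEq A]
    (P : Matrix (S × A) S ℝ) (γ : ℝ)
    (ρ : S → ℝ)
    {d : ℕ} (χ : S × A → Fin d → ℝ) (μ : S → Fin d → ℝ)
    (hP : ∀ (sa : S × A) (s' : S), P sa s' = (χ sa ⬝ᵥ μ s') * ρ s')
    (r r' : S → ℝ)
    (hperp : ∀ g ∈ Submodule.span ℝ (Set.range fun i : Fin d => fun s : S => μ s i),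
      ∑ s, ρ s * (r s - r' s) * g s = 0) :
    (∀ π : S → A, Qfun P γ π r = Qfun P γ π r') ∧
    (∀ π : S → A,
      (∀ (π'' : S → A) (sa : S × A), Qfun P γ π'' r' sa ≤ Qfun P γ π r' sa) →
      (∀ (π'' : S → A) (sa : S × A), Qfun P γ π'' r sa ≤ Qfun P γ π r sa)) := by
  have hker : P *ᵥ (r - r') = 0 :=
    P.mulVec_eq_zero_of_forall_weighted_sum_eq_zero χ μ ρ hP _ fun i =>
      hperp _ (Submodule.subset_span ⟨i, rfl⟩)
  have hQ : ∀ π : S → A, Qfun P γ π r = Qfun P γ π r' := fun π =>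
    Qfun_congr_of_mulVec_eq γ π (sub_eq_zero.mp (by rwa [← mulVec_sub]))
  exact ⟨hQ, fun π hopt π'' sa => by simpa only [hQ] using hopt π'' sa⟩

/-- Under the finite-rank transition model
`P ((s,a), s') = (χ(s,a) ⬝ μ(s')) * ρ(s')` with `ρ > 0`, let `r'` be the orthogonal
projection of the reward `r`, with respect to the inner product
`⟨x, y⟩_ρ = ∑_s ρ(s) x(s) y(s)`, onto the span of the coordinate feature functions
`s ↦ μ(s) i`. Then `Q^π_r = Q^π_{r'}` for every deterministic policy `π`; consequently every
policy optimal for `r'` is also optimal for `r`. -/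
theorem stmt9 {S A : Type*} [Fintype S] [Fintype A] [Nonempty S] [Nonempty A]
    [DecidableEq S] [DecidableEq A]
    (P : Matrix (S × A) S ℝ) (γ : ℝ)
    (hP0 : ∀ sa s', 0 ≤ P sa s') (hP1 : ∀ sa, ∑ s', P sa s' = 1)
    (hγ0 : 0 ≤ γ) (hγ1 : γ < 1)
    (ρ : S → ℝ) (hρ : ∀ s, 0 < ρ s)
    {d : ℕ} (χ : S × A → Fin d → ℝ) (μ : S → Fin d → ℝ)
    (hP : ∀ (sa : S × A) (s' : S), P sa s' = (χ sa ⬝ᵥ μ s') * ρ s')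
    (r r' : S → ℝ)
    (hmem : r' ∈ Submodule.span ℝ (Set.range fun i : Fin d => fun s : S => μ s i))
    (hperp : ∀ g ∈ Submodule.span ℝ (Set.range fun i : Fin d => fun s : S => μ s i),
      ∑ s, ρ s * (r s - r' s) * g s = 0) :
    (∀ π : S → A, Qfun P γ π r = Qfun P γ π r') ∧
    (∀ π : S → A,
      (∀ (π'' : S → A) (sa : S × A), Qfun P γ π'' r' sa ≤ Qfun P γ π r' sa) →
      (∀ (π'' : S → A) (sa : S × A), Qfun P γ π'' r sa ≤ Qfun P γ π r sa)) :=
  stmt9_general P γ ρ χ μ hP r r' hperp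
end
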